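/- In the ring M_n, the images of the monomials x_m := ∏_{{a,b} ∈ m} x_{a,b}, as m ranges over crossing (i.e., not noncrossing) matchings together with all multiset products containing a repeated element or two pairs sharing an element, lie in the span of the monomials indexed by noncrossing matchings; consequently, the dimension of the degree-k graded component of M_n is at most the number of noncrossing matchings of [n] with exactly k pairs. -/
import Mathlib


open MvPolynomial

/-- The defining relations of the ring `M_n`: diagonal generators vanish, `x_{a,b}² = 0`,
`x_{a,b}·x_{a,c} = 0` for distinct `a,b,c`, and the Ptolemy relations
`x_{a,b}x_{c,d} + x_{a,c}x_{b,d} + x_{a,d}x_{b,c} = 0` for distinct `a,b,c,d`. -/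
def relSet (n : ℕ) : Set (MvPolynomial (Sym2 (Fin n)) ℚ) :=
  {p | (∃ a : Fin n, p = X s(a, a)) ∨
       (∃ a b : Fin n, a ≠ b ∧ p = X s(a, b) * X s(a, b)) ∨
       (∃ a b c : Fin n, a ≠ b ∧ a ≠ c ∧ b ≠ c ∧ p = X s(a, b) * X s(a, c)) ∨
       (∃ a b c d : Fin n, a ≠ b ∧ a ≠ c ∧ a ≠ d ∧ b ≠ c ∧ b ≠ d ∧ c ≠ d ∧
         p = X s(a, b) * X s(c, d) + X s(a, c) * X s(b, d) + X s(a, d) * X s(b, c))}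

/-- The ring `M_n`, presented by generators `x_{a,b}` for two-element subsets `{a,b}` of `[n]`
subject to the relations in `relSet`. -/
abbrev Mring (n : ℕ) := MvPolynomial (Sym2 (Fin n)) ℚ ⧸ Ideal.span (relSet n)

/-- The generator `x_{a,b}` of `M_n`. -/
noncomputable def xg {n : ℕ} (a b : Fin n) : Mring n :=
  Ideal.Quotient.mk _ (X s(a, b))

/-- `h(A) = Σ_{{a,b} ⊆ A} x_{a,b}`, the sum over two-element subsets of `A`. -/
noncomputable def hA {n : ℕ} (A : Finset (Fin n)) : Mring n :=
  ∑ a ∈ A, ∑ b ∈ A.filter (fun b => a < b), xg a b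

def IsMatching (n : ℕ) (m : Finset (Finset (Fin n))) : Prop :=
  (∀ p ∈ m, p.card = 2) ∧ (m : Set (Finset (Fin n))).Pairwise fun p q => Disjoint p q

def NoncrossingMatching (n : ℕ) (m : Finset (Finset (Fin n))) : Prop :=
  ¬ ∃ a b c d : Fin n, a < b ∧ b < c ∧ c < d ∧
      ({a, c} : Finset (Fin n)) ∈ m ∧ ({b, d} : Finset (Fin n)) ∈ m

/-- The monomial in `M_n` associated to a matching: `∏_{{a,b} ∈ m} x_{a,b}`
(for a two-element set `p = {a,b}`, `hA p = x_{a,b}`). -/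
noncomputable def matchMonomial {n : ℕ} (m : Finset (Finset (Fin n))) : Mring n :=
  ∏ p ∈ m, hA p

/-- The degree-`k` graded component of `M_n`: the span of the images of all degree-`k`
monomials in the generators (i.e. products of multisets of `k` generators, allowing
repeats and shared indices). -/
noncomputable def gradedPiece (n k : ℕ) : Submodule ℚ (Mring n) :=
  Submodule.span ℚ
    {y | ∃ l : Multiset (Sym2 (Fin n)), Multiset.card l = k ∧
      y = Ideal.Quotient.mk _ (l.map X).prod}

-- helpers
variable {n : ℕ}

noncomputable abbrev qmk (n : ℕ) : MvPolynomial (Sym2 (Fin n)) ℚ →+* Mring n :=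
  Ideal.Quotient.mk (Ideal.span (relSet n))

lemma qmk_rel {p : MvPolynomial (Sym2 (Fin n)) ℚ} (h : p ∈ relSet n) : qmk n p = 0 :=
  Ideal.Quotient.eq_zero_iff_mem.mpr (Ideal.subset_span h)

lemma xg_comm (a b : Fin n) : xg a b = xg b a := by
  unfold xg; rw [Sym2.eq_swap]

lemma xg_diag (a : Fin n) : xg a a = 0 := qmk_rel (Or.inl ⟨a, rfl⟩)

lemma xg_mul_shared {a b c : Fin n} (hab : a ≠ b) (hac : a ≠ c) :
    xg a b * xg a c = 0 := by
  by_cases hbc : b = c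
  · subst hbc
    exact (map_mul (qmk n) _ _).symm.trans (qmk_rel (Or.inr (Or.inl ⟨a, b, hab, rfl⟩)))
  · exact (map_mul (qmk n) _ _).symm.trans
      (qmk_rel (Or.inr (Or.inr (Or.inl ⟨a, b, c, hab, hac, hbc, rfl⟩))))

lemma xg_mul_shared' (e b d : Fin n) : xg e b * xg e d = 0 := by
  rcases eq_or_ne e b with rfl | h1
  · rw [xg_diag, zero_mul]
  rcases eq_or_ne e d with rfl | h2
  · rw [xg_diag, mul_zero]
  exact xg_mul_shared h1 h2

lemma mul_shared {s t : Sym2 (Fin n)} {e : Fin n} (hs : e ∈ s) (ht : e ∈ t) :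
    qmk n (X s) * qmk n (X t) = 0 := by
  induction s using Sym2.ind with
  | _ a b =>
  induction t using Sym2.ind with
  | _ c d =>
  have h1 : qmk n (X s(a,b)) = xg a b := rfl
  have h2 : qmk n (X s(c,d)) = xg c d := rfl
  rw [h1, h2]
  rcases Sym2.mem_iff.mp hs with rfl | rfl <;> rcases Sym2.mem_iff.mp ht with rfl | rfl
  · exact xg_mul_shared' _ _ _
  · rw [xg_comm c]; exact xg_mul_shared' _ _ _
  · rw [xg_comm a]; exact xg_mul_shared' _ _ _
  · rw [xg_comm a, xg_comm c]; exact xg_mul_shared' _ _ _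

lemma ptolemy {a b c d : Fin n} (hab : a < b) (hbc : b < c) (hcd : c < d) :
    xg a c * xg b d = -(xg a b * xg c d) - xg a d * xg b c := by
  have h : xg a b * xg c d + xg a c * xg b d + xg a d * xg b c = 0 := by
    have := qmk_rel (n := n) (Or.inr (Or.inr (Or.inr ⟨a, b, c, d, hab.ne,
      (hab.trans hbc).ne, (hab.trans (hbc.trans hcd)).ne, hbc.ne,
      (hbc.trans hcd).ne, hcd.ne, rfl⟩)))
    simpa [xg, map_add, map_mul] using this
  linear_combination h

lemma hA_pair {a b : Fin n} (h : a < b) : hA {a, b} = xg a b := by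
  have hne : a ≠ b := h.ne
  rw [hA, Finset.sum_pair hne]
  have e1 : ({a, b} : Finset (Fin n)).filter (fun x => a < x) = {b} := by
    ext x
    simp only [Finset.mem_filter, Finset.mem_insert, Finset.mem_singleton]
    constructor
    · rintro ⟨rfl | rfl, hx⟩
      · exact absurd hx (lt_irrefl _)
      · rfl
    · rintro rfl; exact ⟨Or.inr rfl, h⟩
  have e2 : ({a, b} : Finset (Fin n)).filter (fun x => b < x) = ∅ := by
    ext x
    simp only [Finset.mem_filter, Finset.mem_insert, Finset.mem_singleton,
      Finset.notMem_empty, iff_false, not_and]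
    rintro (rfl | rfl)
    · exact fun hx => absurd (h.trans hx) (lt_irrefl _)
    · exact fun hx => absurd hx (lt_irrefl _)
  rw [e1, e2, Finset.sum_singleton, Finset.sum_empty, add_zero]

/-- weight of a chord -/
noncomputable def wgt (n : ℕ) : Sym2 (Fin n) → ℕ :=
  Sym2.lift ⟨fun a b => (max a.val b.val - min a.val b.val) *
    (2 * n - (max a.val b.val - min a.val b.val)), by
    intro a b; simp only []; rw [max_comm a.val b.val, min_comm a.val b.val]⟩

lemma wgt_sq {a b : Fin n} (h : a < b) : wgt n s(a, b) = (b.val - a.val) * (2 * n - (b.val - a.val)) := by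
  have : a.val ≤ b.val := le_of_lt h
  simp [wgt, max_eq_right this, min_eq_left this]

noncomputable def meas (n : ℕ) (l : Multiset (Sym2 (Fin n))) : ℕ := (l.map (wgt n)).sum

lemma wgt_ineq1 {a b c d : Fin n} (hab : a < b) (hbc : b < c) (hcd : c < d) :
    wgt n s(a, b) + wgt n s(c, d) < wgt n s(a, c) + wgt n s(b, d) := by
  rw [wgt_sq hab, wgt_sq hcd, wgt_sq (hab.trans hbc), wgt_sq (hbc.trans hcd)]
  have h1 : a.val < b.val := hab
  have h2 : b.val < c.val := hbc
  have h3 : c.val < d.val := hcd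
  have h4 : d.val < n := d.isLt
  zify [le_of_lt h1, le_of_lt h2, le_of_lt h3, le_of_lt (h1.trans h2),
    le_of_lt (h2.trans h3), le_of_lt ((h1.trans h2).trans h3),
    show b.val - a.val ≤ 2 * n by omega, show d.val - c.val ≤ 2 * n by omega,
    show c.val - a.val ≤ 2 * n by omega, show d.val - b.val ≤ 2 * n by omega]
  nlinarith [h1, h2, h3, h4]

lemma wgt_ineq2 {a b c d : Fin n} (hab : a < b) (hbc : b < c) (hcd : c < d) :
    wgt n s(a, d) + wgt n s(b, c) < wgt n s(a, c) + wgt n s(b, d) := by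
  rw [wgt_sq ((hab.trans hbc).trans hcd), wgt_sq hbc, wgt_sq (hab.trans hbc), wgt_sq (hbc.trans hcd)]
  have h1 : a.val < b.val := hab
  have h2 : b.val < c.val := hbc
  have h3 : c.val < d.val := hcd
  have h4 : d.val < n := d.isLt
  zify [le_of_lt h2, le_of_lt (h1.trans h2), le_of_lt (h2.trans h3),
    le_of_lt ((h1.trans h2).trans h3),
    show c.val - b.val ≤ 2 * n by omega, show d.val - a.val ≤ 2 * n by omega,
    show c.val - a.val ≤ 2 * n by omega, show d.val - b.val ≤ 2 * n by omega]
  nlinarith [h1, h2, h3, h4]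

/-- a Sym2 to its underlying pair finset -/
def pfin (n : ℕ) : Sym2 (Fin n) → Finset (Fin n) :=
  Sym2.lift ⟨fun a b => {a, b}, fun a b => Finset.pair_comm a b⟩

lemma pfin_sq (a b : Fin n) : pfin n s(a, b) = {a, b} := rfl

lemma pfin_eq_pair {s : Sym2 (Fin n)} {a b : Fin n} (hab : a ≠ b)
    (h : pfin n s = {a, b}) : s = s(a, b) := by
  induction s using Sym2.ind with
  | _ x y =>
  rw [pfin_sq] at h
  have hx : x ∈ ({a, b} : Finset (Fin n)) := h ▸ Finset.mem_insert_self x {y}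
  have hy : y ∈ ({a, b} : Finset (Fin n)) := h ▸ (Finset.mem_insert.mpr (Or.inr (Finset.mem_singleton_self y)))
  have ha : a ∈ ({x, y} : Finset (Fin n)) := h ▸ Finset.mem_insert_self a {b}
  have hb : b ∈ ({x, y} : Finset (Fin n)) := h ▸ (Finset.mem_insert.mpr (Or.inr (Finset.mem_singleton_self b)))
  simp only [Finset.mem_insert, Finset.mem_singleton] at hx hy ha hb
  rcases hx with rfl | rfl <;> rcases hy with rfl | rfl
  · rcases hb with rfl | rfl
    · exact absurd rfl hab
    · rfl
  · rfl
  · rw [Sym2.eq_swap]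
  · rcases ha with rfl | rfl
    · exact absurd rfl hab
    · rw [Sym2.eq_swap]


lemma mem_pfin {e : Fin n} {s : Sym2 (Fin n)} : e ∈ pfin n s ↔ e ∈ s := by
  induction s using Sym2.ind with
  | _ x y => rw [pfin_sq]; simp [Sym2.mem_iff]

lemma hA_pfin {s : Sym2 (Fin n)} (h : ¬ s.IsDiag) : hA (pfin n s) = qmk n (X s) := by
  induction s using Sym2.ind with
  | _ x y =>
  have hxy : x ≠ y := by simpa [Sym2.mk_isDiag_iff] using h
  rw [pfin_sq]
  rcases hxy.lt_or_gt with hlt | hlt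
  · exact hA_pair hlt
  · rw [Finset.pair_comm, hA_pair hlt, xg_comm]
    rfl

lemma key (n k : ℕ) : ∀ (l : Multiset (Sym2 (Fin n))), Multiset.card l = k →
    qmk n (l.map X).prod ∈ Submodule.span ℚ
      {y : Mring n | ∃ m', IsMatching n m' ∧ NoncrossingMatching n m' ∧
        m'.card = k ∧ y = matchMonomial m'} := by
  have main : ∀ N (l : Multiset (Sym2 (Fin n))), meas n l = N → Multiset.card l = k →
      qmk n (l.map X).prod ∈ Submodule.span ℚ
        {y : Mring n | ∃ m', IsMatching n m' ∧ NoncrossingMatching n m' ∧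
          m'.card = k ∧ y = matchMonomial m'} := by
    intro N
    induction N using Nat.strong_induction_on with
    | _ N ih =>
    intro l hN hk
    by_cases hdiag : ∃ s ∈ l, s.IsDiag
    · -- a diagonal generator: product is 0
      obtain ⟨s, hsl, hsd⟩ := hdiag
      obtain ⟨a, rfl⟩ : ∃ a, s = s(a, a) := by
        induction s using Sym2.ind with
        | _ x y => exact ⟨x, by rw [Sym2.mk_isDiag_iff.mp hsd]⟩
      rw [← Multiset.cons_erase hsl, Multiset.map_cons, Multiset.prod_cons, map_mul,
        qmk_rel (Or.inl ⟨a, rfl⟩), zero_mul]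
      exact Submodule.zero_mem _
    by_cases hshare : ∃ s ∈ l, ∃ t ∈ l.erase s, ∃ e, e ∈ s ∧ e ∈ t
    · -- two factors share an index: product is 0
      obtain ⟨s, hsl, t, htl, e, hes, het⟩ := hshare
      have h1 : l = s ::ₘ l.erase s := (Multiset.cons_erase hsl).symm
      have h2 : l.erase s = t ::ₘ (l.erase s).erase t := (Multiset.cons_erase htl).symm
      rw [h1, h2, Multiset.map_cons, Multiset.map_cons, Multiset.prod_cons,
        Multiset.prod_cons, map_mul, map_mul, ← mul_assoc, mul_shared hes het, zero_mul]
      exact Submodule.zero_mem _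
    push_neg at hdiag hshare
    have hnodup : l.Nodup := by
      rw [Multiset.nodup_iff_count_le_one]
      intro s
      by_contra hc
      push_neg at hc
      have hsl : s ∈ l := by
        rw [← Multiset.count_pos]; omega
      have hse : s ∈ l.erase s := by
        rw [← Multiset.count_pos, Multiset.count_erase_self]; omega
      obtain ⟨e, he⟩ : ∃ e, e ∈ s := by
        induction s using Sym2.ind with
        | _ x y => exact ⟨x, Sym2.mem_iff.mpr (Or.inl rfl)⟩
      exact hshare s hsl s hse e he he
    have hdisj : ∀ s ∈ l, ∀ t ∈ l, s ≠ t → ∀ e : Fin n, e ∈ s → e ∉ t := by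
      intro s hs t ht hst e hes het
      exact hshare s hs t ((Multiset.mem_erase_of_ne (Ne.symm hst)).mpr ht) e hes het
    set m : Finset (Finset (Fin n)) := l.toFinset.image (pfin n) with hm
    have hinj : ∀ s ∈ l.toFinset, ∀ t ∈ l.toFinset, pfin n s = pfin n t → s = t := by
      intro s hs t ht hpf
      by_contra hst
      induction s using Sym2.ind with
      | _ x y =>
      exact hdisj _ (Multiset.mem_toFinset.mp hs) _ (Multiset.mem_toFinset.mp ht) hst x
        (Sym2.mem_iff.mpr (Or.inl rfl))
        (mem_pfin.mp (hpf ▸ mem_pfin.mpr (Sym2.mem_iff.mpr (Or.inl rfl))))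
    have hcard2 : ∀ p ∈ m, p.card = 2 := by
      intro p hp
      obtain ⟨s, hs, rfl⟩ := Finset.mem_image.mp hp
      induction s using Sym2.ind with
      | _ x y =>
      have : x ≠ y := by
        have := hdiag _ (Multiset.mem_toFinset.mp hs)
        simpa [Sym2.mk_isDiag_iff] using this
      rw [pfin_sq]
      exact Finset.card_pair this
    have hmatch : IsMatching n m := by
      refine ⟨hcard2, ?_⟩
      intro p hp q hq hpq
      obtain ⟨s, hs, rfl⟩ := Finset.mem_image.mp hp
      obtain ⟨t, ht, rfl⟩ := Finset.mem_image.mp hq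
      have hst : s ≠ t := fun h => hpq (by rw [h])
      rw [Finset.disjoint_left]
      intro e he het
      exact hdisj _ (Multiset.mem_toFinset.mp hs) _ (Multiset.mem_toFinset.mp ht) hst e
        (mem_pfin.mp he) (mem_pfin.mp het)
    have hmcard : m.card = k := by
      rw [hm, Finset.card_image_of_injOn hinj, Multiset.toFinset_card_of_nodup hnodup, hk]
    by_cases hnc : NoncrossingMatching n m
    · -- noncrossing: the product IS a matching monomial
      have hprod : qmk n (l.map X).prod = matchMonomial m := by
        rw [matchMonomial, hm, Finset.prod_image hinj]
        have step : ∀ s ∈ l.toFinset, hA (pfin n s) = qmk n (X s) := fun s hs =>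
          hA_pfin (hdiag s (Multiset.mem_toFinset.mp hs))
        rw [Finset.prod_congr rfl step]
        rw [map_multiset_prod, Multiset.map_map]
        rw [Finset.prod, Multiset.toFinset_val, Multiset.dedup_eq_self.mpr hnodup]
        rfl
      rw [hprod]
      exact Submodule.subset_span ⟨m, hmatch, hnc, hmcard, rfl⟩
    · -- crossing: resolve via Ptolemy and recurse
      rw [NoncrossingMatching, not_not] at hnc
      obtain ⟨a, b, c, d, hab, hbc, hcd, hacm, hbdm⟩ := hnc
      obtain ⟨s₁, hs₁, hps₁⟩ := Finset.mem_image.mp hacm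
      obtain ⟨s₂, hs₂, hps₂⟩ := Finset.mem_image.mp hbdm
      have hac : s₁ = s(a, c) := pfin_eq_pair (hab.trans hbc).ne hps₁
      have hbd : s₂ = s(b, d) := pfin_eq_pair (hbc.trans hcd).ne hps₂
      subst hac hbd
      have hs₁l : s(a, c) ∈ l := Multiset.mem_toFinset.mp hs₁
      have hs₂l : s(b, d) ∈ l := Multiset.mem_toFinset.mp hs₂
      have hne12 : s(a, c) ≠ s(b, d) := by
        intro h
        have : a ∈ s(b, d) := h ▸ Sym2.mem_iff.mpr (Or.inl rfl)
        rcases Sym2.mem_iff.mp this with rfl | rfl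
        · exact absurd hab (lt_irrefl _)
        · exact absurd (hab.trans (hbc.trans hcd)) (lt_irrefl _)
      have hs₂e : s(b, d) ∈ l.erase s(a, c) :=
        (Multiset.mem_erase_of_ne hne12.symm).mpr hs₂l
      set l₂ : Multiset (Sym2 (Fin n)) := (l.erase s(a, c)).erase s(b, d) with hl₂
      have hldecomp : l = s(a, c) ::ₘ s(b, d) ::ₘ l₂ := by
        rw [hl₂, Multiset.cons_erase hs₂e, Multiset.cons_erase hs₁l]
      set l₃ : Multiset (Sym2 (Fin n)) := s(a, b) ::ₘ s(c, d) ::ₘ l₂ with hl₃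
      set l₄ : Multiset (Sym2 (Fin n)) := s(a, d) ::ₘ s(b, c) ::ₘ l₂ with hl₄
      have hcard₃ : Multiset.card l₃ = k := by
        rw [hldecomp] at hk; rw [hl₃]; simp only [Multiset.card_cons] at hk ⊢; omega
      have hcard₄ : Multiset.card l₄ = k := by
        rw [hldecomp] at hk; rw [hl₄]; simp only [Multiset.card_cons] at hk ⊢; omega
      have hmeas₃ : meas n l₃ < N := by
        rw [← hN, hldecomp, hl₃]
        simp only [meas, Multiset.map_cons, Multiset.sum_cons]
        have := wgt_ineq1 hab hbc hcd
        omega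
      have hmeas₄ : meas n l₄ < N := by
        rw [← hN, hldecomp, hl₄]
        simp only [meas, Multiset.map_cons, Multiset.sum_cons]
        have := wgt_ineq2 hab hbc hcd
        omega
      have hu := ih _ hmeas₃ l₃ rfl hcard₃
      have hv := ih _ hmeas₄ l₄ rfl hcard₄
      have heq : qmk n (l.map X).prod =
          -(qmk n (l₃.map X).prod) - qmk n (l₄.map X).prod := by
        rw [hldecomp, hl₃, hl₄]
        simp only [Multiset.map_cons, Multiset.prod_cons, map_mul]
        have e1 : qmk n (X s(a, c)) = xg a c := rfl
        have e2 : qmk n (X s(b, d)) = xg b d := rfl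
        have e3 : qmk n (X s(a, b)) = xg a b := rfl
        have e4 : qmk n (X s(c, d)) = xg c d := rfl
        have e5 : qmk n (X s(a, d)) = xg a d := rfl
        have e6 : qmk n (X s(b, c)) = xg b c := rfl
        rw [e1, e2, e3, e4, e5, e6, ← mul_assoc, ← mul_assoc, ← mul_assoc,
          ptolemy hab hbc hcd]
        ring
      rw [heq]
      exact sub_mem (neg_mem hu) hv
  exact fun l hl => main (meas n l) l rfl hl


/-- Every degree-`k` monomial of `M_n` (in particular those indexed by crossing matchings
or by multisets with a repeated generator or two pairs sharing an element) lies in the span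
of the monomials of noncrossing matchings with `k` pairs; consequently the degree-`k`
graded component has dimension at most the number of noncrossing matchings of `[n]` with
exactly `k` pairs. -/
theorem gradedPiece_dim_le (n k : ℕ) :
    (∀ l : Multiset (Sym2 (Fin n)), Multiset.card l = k →
      (Ideal.Quotient.mk (Ideal.span (relSet n)) (l.map X).prod) ∈
        Submodule.span ℚ
          {y : Mring n | ∃ m', IsMatching n m' ∧ NoncrossingMatching n m' ∧
            m'.card = k ∧ y = matchMonomial m'}) ∧
    Module.finrank ℚ (gradedPiece n k) ≤
      Nat.card {m : Finset (Finset (Fin n)) //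
        IsMatching n m ∧ NoncrossingMatching n m ∧ m.card = k} := by
  constructor
  · exact key n k
  · classical
    set T : Set (Finset (Finset (Fin n))) :=
      {m | IsMatching n m ∧ NoncrossingMatching n m ∧ m.card = k} with hT
    have hTfin : T.Finite := Set.toFinite T
    set F : Finset (Mring n) := hTfin.toFinset.image matchMonomial with hF
    have hSF : {y : Mring n | ∃ m', IsMatching n m' ∧ NoncrossingMatching n m' ∧
        m'.card = k ∧ y = matchMonomial m'} = ↑F := by
      ext y
      simp only [hF, Finset.coe_image, Set.mem_image, Set.Finite.coe_toFinset,
        Set.mem_setOf_eq, hT]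
      constructor
      · rintro ⟨m', h1, h2, h3, rfl⟩; exact ⟨m', ⟨h1, h2, h3⟩, rfl⟩
      · rintro ⟨m', ⟨h1, h2, h3⟩, rfl⟩; exact ⟨m', h1, h2, h3, rfl⟩
    have hle : gradedPiece n k ≤ Submodule.span ℚ (↑F : Set (Mring n)) := by
      rw [gradedPiece, Submodule.span_le]
      rintro y ⟨l, hl, rfl⟩
      have := key n k l hl
      rwa [hSF] at this
    haveI : FiniteDimensional ℚ (Submodule.span ℚ (↑F : Set (Mring n))) :=
      FiniteDimensional.span_of_finite ℚ F.finite_toSet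
    calc Module.finrank ℚ (gradedPiece n k)
        ≤ Module.finrank ℚ (Submodule.span ℚ (↑F : Set (Mring n))) :=
          Submodule.finrank_mono hle
      _ ≤ F.card := finrank_span_finset_le_card F
      _ ≤ hTfin.toFinset.card := Finset.card_image_le
      _ = Nat.card T := (Nat.card_eq_card_finite_toFinset hTfin).symm
      _ = Nat.card {m : Finset (Finset (Fin n)) //
            IsMatching n m ∧ NoncrossingMatching n m ∧ m.card = k} := rfl
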